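/- arXiv:1409.1395 — 5 statements merged into one kernel-verified Lean document; each statement's English description precedes it below -/
import Mathlib

section
/- Each unital C*-algebra without characters contains a unital separable sub-C*-algebra without characters; that is, if A is a unital C*-algebra admitting no characters, then there exists a closed star-subalgebra B of A containing the unit of A such that B is separable (as a topological space) and B admits no characters. -/
/-!
If every closed separable star-subalgebra of `A` had a character, then for each finite `F ⊆ A`
the closed star-subalgebra generated by `F` would carry one, and Hahn–Banach extends it to a
functional of norm `≤ 1` on `A` that is unital and multiplicative on `F`. These sets of
functionals are weak-* compact (Banach–Alaoglu) and directed, so they have a common point,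
which is a character of `A`.
-/

open TopologicalSpace Metric WeakDual

theorem Set.Countable.submonoidClosure {M : Type*} [Monoid M] {s : Set M} (hs : s.Countable) :
    (Submonoid.closure s : Set M).Countable := by
  have : Countable s := hs.to_subtype
  rw [Submonoid.closure_eq_mrange, MonoidHom.coe_mrange]
  exact Set.countable_range _

theorem StarAlgebra.isSeparable_adjoin {R A : Type*} [CommSemiring R] [StarRing R]
    [TopologicalSpace R] [SeparableSpace R] [Semiring A] [StarRing A] [Algebra R A]
    [StarModule R A] [TopologicalSpace A] [ContinuousAdd A] [ContinuousSMul R A] {s : Set A}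
    (hs : s.Countable) : IsSeparable (adjoin R s : Set A) := by
  have hgen : (s ∪ star s).Countable := hs.union (hs.preimage star_injective)
  have := hgen.submonoidClosure.isSeparable.span (R := R)
  rwa [← StarAlgebra.adjoin_eq_span] at this

namespace WeakDual

variable {A : Type*}

def partialCharacters (𝕜 : Type*) [NontriviallyNormedField 𝕜] [NormedRing A]
    [NormedAlgebra 𝕜 A] (S : Set A) : Set (WeakDual 𝕜 A) :=
  toStrongDual ⁻¹' closedBall 0 1 ∩ {φ | φ 1 = 1 ∧ ∀ x ∈ S, ∀ y ∈ S, φ (x * y) = φ x * φ y}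

section NontriviallyNormedField

variable {𝕜 : Type*} [NontriviallyNormedField 𝕜] [NormedRing A] [NormedAlgebra 𝕜 A]

theorem partialCharacters_antitone : Antitone (partialCharacters 𝕜 : Set A → _) :=
  fun _ _ hST _ ⟨hnorm, hone, hmul⟩ =>
    ⟨hnorm, hone, fun x hx y hy => hmul x (hST hx) y (hST hy)⟩

theorem partialCharacters_univ_subset :
    partialCharacters 𝕜 (Set.univ : Set A) ⊆ characterSpace 𝕜 A :=
  fun φ ⟨_, hone, hmul⟩ => by
    rw [CharacterSpace.eq_set_map_one_map_mul]
    exact ⟨hone, fun x y => hmul x trivial y trivial⟩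

theorem isCompact_partialCharacters [ProperSpace 𝕜] (S : Set A) :
    IsCompact (partialCharacters 𝕜 S) := by
  refine (isCompact_closedBall 0 1).inter_right ?_
  simp only [Set.ofPred_and, Set.ofPred_forall]
  exact (isClosed_eq (eval_continuous 1) continuous_const).inter <|
    isClosed_biInter fun x _ => isClosed_biInter fun y _ =>
      isClosed_eq (eval_continuous _) ((eval_continuous _).mul (eval_continuous _))

theorem nonempty_partialCharacters_univ [ProperSpace 𝕜]
    (h : ∀ F : Finset A, (partialCharacters 𝕜 (F : Set A)).Nonempty) :
    (partialCharacters 𝕜 (Set.univ : Set A)).Nonempty := by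
  classical
  have hdir : Directed (· ⊇ ·) fun F : Finset A => partialCharacters 𝕜 (F : Set A) :=
    fun F G =>
      ⟨F ∪ G, partialCharacters_antitone (by simp), partialCharacters_antitone (by simp)⟩
  obtain ⟨φ, hφ⟩ := IsCompact.nonempty_iInter_of_directed_nonempty_isCompact_isClosed _ hdir h
    (fun _ => isCompact_partialCharacters _) (fun _ => (isCompact_partialCharacters _).isClosed)
  rw [Set.mem_iInter] at hφ
  refine ⟨φ, (hφ ∅).1, (hφ ∅).2.1, fun x _ y _ => (hφ {x, y}).2.2 x (by simp) y (by simp)⟩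

end NontriviallyNormedField

end WeakDual

theorem Subalgebra.partialCharacters_nonempty {𝕜 A : Type*} [RCLike 𝕜] [NormedRing A]
    [NormedAlgebra 𝕜 A] [NormOneClass A] (B : Subalgebra 𝕜 A) [CompleteSpace B] (χ : B →ₐ[𝕜] 𝕜) :
    (partialCharacters 𝕜 (B : Set A)).Nonempty := by
  -- instance search fails to match the `Subalgebra` norm with the `SubringClass` one
  have : NormOneClass B := SubringClass.toNormOneClass B
  obtain ⟨g, hext, hg⟩ :=
    exists_extension_norm_eq (Subalgebra.toSubmodule B) χ.toContinuousLinearMap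
  replace hext : ∀ x : B, g x = χ x := hext
  have hnorm : ‖g‖ = 1 := hg.trans χ.toContinuousLinearMap_norm
  refine ⟨StrongDual.toWeakDual g, by simp [hnorm], (hext 1).trans (map_one χ), ?_⟩
  intro x hx y hy
  change g (x * y) = g x * g y
  rw [hext ⟨x, hx⟩, hext ⟨y, hy⟩, ← map_mul]
  exact hext (⟨x, hx⟩ * ⟨y, hy⟩)

/-- Each unital C*-algebra without characters contains a unital separable
sub-C*-algebra without characters: if `A` is a unital C*-algebra admitting no characters
(a character being a unital algebra homomorphism to `ℂ`), then there is a closed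
star-subalgebra `B` of `A` (automatically containing the unit of `A`) which is separable
as a topological space and admits no characters. -/
theorem exists_separable_subalgebra_without_characters (A : Type*) [CStarAlgebra A]
    (h : IsEmpty (A →ₐ[ℂ] ℂ)) :
    ∃ B : StarSubalgebra ℂ A, IsClosed (B : Set A) ∧
      TopologicalSpace.SeparableSpace B ∧ IsEmpty (B →ₐ[ℂ] ℂ) := by
  by_contra! hchar
  suffices ∀ F : Finset A, (partialCharacters ℂ (F : Set A)).Nonempty by
    obtain ⟨φ, hφ⟩ := nonempty_partialCharacters_univ this
    exact h.false (CharacterSpace.toAlgHom ⟨φ, partialCharacters_univ_subset hφ⟩)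
  intro F
  let B := (StarAlgebra.adjoin ℂ (F : Set A)).topologicalClosure
  have hsep : SeparableSpace B :=
    (StarAlgebra.isSeparable_adjoin F.countable_toSet).closure.separableSpace
  obtain ⟨χ⟩ := hchar B (StarSubalgebra.isClosed_topologicalClosure _) hsep
  have : Nontrivial B := χ.domain_nontrivial
  have : Nontrivial A := Subtype.val_injective.nontrivial (α := B)
  have : CompleteSpace B.toSubalgebra := inferInstanceAs (CompleteSpace B)
  refine (B.toSubalgebra.partialCharacters_nonempty χ).mono (partialCharacters_antitone ?_)
  exact (StarAlgebra.subset_adjoin ℂ _).trans (StarSubalgebra.le_topologicalClosure _)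
end

section
/- Let A be a unital C*-algebra and let ρ be a state on A. Then ρ is a character (i.e., ρ is multiplicative: ρ(xy) = ρ(x)ρ(y) for all x, y ∈ A) if and only if |ρ(u)| = 1 for every unitary u in A. -/
/-!
A state `f` is a positive functional, so `⟨a, b⟩ = f (a⋆ b)` is a semi-inner product (the GNS
construction). If `u` is unitary and `c = f u`, then `‖u - c‖² = 1 - |c|²`; so `|c| = 1` puts
`u - c` in the null space of this form, and Cauchy–Schwarz gives `f (x (u - c)) = 0`, i.e.
`f (x u) = f x f u` for all `x`. Since unitaries span a unital C⋆-algebra, `f` is multiplicative.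
Conversely, multiplicativity gives `1 = f (u⋆ u) = |f u|²`.
-/

open scoped ComplexOrder

namespace PositiveLinearMap

section NonUnital

variable {A : Type*} [NonUnitalCStarAlgebra A] [PartialOrder A] [StarOrderedRing A]
  (f : A →ₚ[ℂ] ℂ)

lemma apply_mul_eq_zero_of_apply_star_mul_self_eq_zero {c : A} (hc : f (star c * c) = 0)
    (b : A) : f (b * c) = 0 := by
  have hc' : ‖f.toPreGNS c‖ = 0 := by
    simpa [hc] using f.preGNS_norm_sq (f.toPreGNS c)
  have h := norm_inner_le_norm (𝕜 := ℂ) (f.toPreGNS (star b)) (f.toPreGNS c)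
  rw [hc', mul_zero, preGNS_inner_def] at h
  simpa using h

end NonUnital

section Unital

variable {A : Type*} [CStarAlgebra A] [PartialOrder A] [StarOrderedRing A] (f : A →ₚ[ℂ] ℂ)

lemma apply_star_mul_self_sub_apply_smul_one (hf : f 1 = 1) (u : unitary A) :
    f (star ((u : A) - f u • 1) * ((u : A) - f u • 1)) = 1 - ‖f u‖ ^ 2 := by
  have hexp : star ((u : A) - f u • 1) * ((u : A) - f u • 1) =
      (1 + star (f u) * f u) • (1 : A) - f u • star (u : A) - star (f u) • (u : A) := by
    simp only [star_sub, star_smul, star_one, sub_mul, mul_sub, smul_mul_assoc, mul_smul_comm,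
      one_mul, mul_one, Unitary.coe_star_mul_self]
    module
  rw [hexp, map_sub, map_sub, map_smul, map_smul, map_smul, map_star, hf, ← Complex.conj_mul']
  simp only [smul_eq_mul, Complex.star_def]
  ring

lemma apply_mul_unitary_of_norm_eq_one (hf : f 1 = 1) {u : unitary A} (hu : ‖f u‖ = 1)
    (x : A) : f (x * u) = f x * f u := by
  have hnull : f (star ((u : A) - f u • 1) * ((u : A) - f u • 1)) = 0 := by
    rw [f.apply_star_mul_self_sub_apply_smul_one hf, hu]
    norm_num
  have h := f.apply_mul_eq_zero_of_apply_star_mul_self_eq_zero hnull x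
  rw [mul_sub, mul_smul_comm, mul_one, map_sub, map_smul, smul_eq_mul, sub_eq_zero] at h
  rw [h, mul_comm]

lemma norm_apply_unitary_of_map_mul (hf : f 1 = 1) (hmul : ∀ x y, f (x * y) = f x * f y)
    (u : unitary A) : ‖f u‖ = 1 := by
  have h : star (f u) * f u = 1 := by
    rw [← map_star, ← hmul, Unitary.coe_star_mul_self, hf]
  rw [Complex.star_def, Complex.conj_mul', ← Complex.ofReal_pow] at h
  exact (pow_eq_one_iff_of_nonneg (norm_nonneg _) two_ne_zero).mp (by exact_mod_cast h)

lemma map_mul_iff_norm_apply_unitary_eq_one (hf : f 1 = 1) :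
    (∀ x y : A, f (x * y) = f x * f y) ↔ ∀ u : unitary A, ‖f u‖ = 1 := by
  refine ⟨f.norm_apply_unitary_of_map_mul hf, fun hu x y => ?_⟩
  have hx : f.toLinearMap ∘ₗ LinearMap.mulLeft ℂ x = f x • f.toLinearMap :=
    LinearMap.ext_on (CStarAlgebra.span_unitary A)
      fun u hu' => f.apply_mul_unitary_of_norm_eq_one hf (hu ⟨u, hu'⟩) x
  exact LinearMap.congr_fun hx y

end Unital

end PositiveLinearMap

/-- Let `A` be a unital C*-algebra and let `ρ` be a state on `A`
(a linear functional with `ρ 1 = 1` and `ρ (a* a) ≥ 0` for all `a`).  Then `ρ` is a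
character, i.e. multiplicative, if and only if `|ρ(u)| = 1` for every unitary `u` in `A`. -/
theorem state_isMultiplicative_iff_norm_one_on_unitaries (A : Type*) [CStarAlgebra A]
    (ρ : A →ₗ[ℂ] ℂ) (hρ1 : ρ 1 = 1) (hρpos : ∀ a : A, 0 ≤ ρ (star a * a)) :
    (∀ x y : A, ρ (x * y) = ρ x * ρ y) ↔ (∀ u : unitary A, ‖ρ u‖ = 1) := by
  let _ := CStarAlgebra.spectralOrder A
  have := CStarAlgebra.spectralOrderedRing A
  let f : A →ₚ[ℂ] ℂ := .mk₀ ρ fun x hx => by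
    obtain ⟨b, rfl⟩ := CStarAlgebra.nonneg_iff_eq_star_mul_self.mp hx
    exact hρpos b
  exact f.map_mul_iff_norm_apply_unitary_eq_one hρ1
end

section
/- Let a be a positive full element in a unital C*-algebra A. Then there exists ε > 0 such that (a − ε)₊ is full; and for any ε > 0 such that (a − ε)₊ is full, the element f_ε(a) obtained by applying the continuous function f_ε(t) = min(ε⁻¹ t, 1) to a via continuous functional calculus is purely full. In particular, the hereditary subalgebra generated by any full positive element contains a purely full element. -/
/-- An element `a` of a C*-algebra `A` is *full* if the only closed two-sided ideal of `A`
containing `a` is `A` itself, i.e. the closed two-sided ideal generated by `a` is all of `A`. -/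
def IsFullElem {A : Type*} [NonUnitalNonAssocRing A] [TopologicalSpace A] (a : A) : Prop :=
  ∀ I : TwoSidedIdeal A, IsClosed (I : Set A) → a ∈ I → I = ⊤

/-- A positive contraction `a` in a unital C*-algebra is *purely full* if `(a - ε)₊` is full
for every `ε ∈ [0, 1)`, where `(a - ε)₊ = cfc (fun t => max (t - ε) 0) a` is obtained by the
continuous functional calculus. -/
def PurelyFull {A : Type*} [CStarAlgebra A] [PartialOrder A] [StarOrderedRing A] (a : A) :
    Prop :=
  0 ≤ a ∧ ‖a‖ ≤ 1 ∧
    ∀ ε : ℝ, 0 ≤ ε → ε < 1 → IsFullElem (cfc (fun t : ℝ => max (t - ε) 0) a)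

section Aux

variable {A : Type*} [CStarAlgebra A] [PartialOrder A] [StarOrderedRing A]

/-- If `p = k * q` pointwise with everything continuous, then `cfc q a ∈ I` implies
`cfc p a ∈ I` for any two-sided ideal `I`. -/
private lemma factor_mem (a : A) {p q : ℝ → ℝ} (k : ℝ → ℝ)
    (hq : Continuous q) (hk : Continuous k)
    (hpq : ∀ t, p t = k t * q t) (I : TwoSidedIdeal A) (hm : cfc q a ∈ I) :
    cfc p a ∈ I := by
  have h1 : cfc p a = cfc k a * cfc q a := by
    rw [← cfc_mul k q a hk.continuousOn hq.continuousOn]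
    exact cfc_congr fun t _ => hpq t
  rw [h1]
  exact I.mul_mem_left _ _ hm

/-- Monotonicity: if `(a - ε)₊ ∈ I` and `ε ≤ ε'` then `(a - ε')₊ ∈ I`. -/
private lemma pull_mem (a : A) {ε ε' : ℝ} (hε : 0 < ε) (h : ε ≤ ε') (I : TwoSidedIdeal A)
    (hm : cfc (fun t : ℝ => max (t - ε) 0) a ∈ I) :
    cfc (fun t : ℝ => max (t - ε') 0) a ∈ I := by
  rcases eq_or_lt_of_le h with rfl | hlt
  · exact hm
  · have hden : ∀ t : ℝ, max (t - ε) (ε' - ε) ≠ 0 :=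
      fun t => ne_of_gt (lt_of_lt_of_le (by linarith) (le_max_right _ _))
    refine factor_mem a (fun t => max (t - ε') 0 / max (t - ε) (ε' - ε))
      (by fun_prop) (Continuous.div (by fun_prop) (by fun_prop) hden) ?_ I hm
    intro t
    beta_reduce
    rcases le_or_gt t ε' with ht | ht
    · rw [max_eq_right (by linarith : t - ε' ≤ 0), zero_div, zero_mul]
    · rw [max_eq_left (by linarith : (0:ℝ) ≤ t - ε'),
        max_eq_left (by linarith : ε' - ε ≤ t - ε),
        max_eq_left (by linarith : (0:ℝ) ≤ t - ε),
        div_mul_cancel₀ _ (by linarith : (0:ℝ) < t - ε).ne']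

/-- The key transfer lemma: if `(a - ε)₊` is full and `g` is a continuous function which is
identically `1` past `ε`, then `(g(a) - δ)₊` is full for any `0 ≤ δ < 1`. -/
private lemma key_full (a : A) {ε δ : ℝ} (hδ1 : δ < 1)
    {g : ℝ → ℝ} (hgc : Continuous g) (hg1 : ∀ t, ε < t → g t = 1)
    (hfull : IsFullElem (cfc (fun t : ℝ => max (t - ε) 0) a)) :
    IsFullElem (cfc (fun t : ℝ => max (g t - δ) 0) a) := by
  intro I hI hm
  refine hfull I hI ?_
  refine factor_mem a (fun t => (1 - δ)⁻¹ * max (t - ε) 0)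
    (by fun_prop) (by fun_prop) ?_ I hm
  intro t
  beta_reduce
  rcases le_or_gt t ε with ht | ht
  · rw [max_eq_right (by linarith : t - ε ≤ 0), mul_zero, zero_mul]
  · rw [hg1 t ht, max_eq_left (by linarith : (0:ℝ) ≤ 1 - δ),
      mul_comm ((1 - δ)⁻¹) (max (t - ε) 0), mul_assoc,
      inv_mul_cancel₀ (by linarith : (1:ℝ) - δ ≠ 0), mul_one]

/-- Part 1: there is some `ε > 0` with `(a - ε)₊` full. -/
private lemma exists_eps (a : A) (ha : 0 ≤ a) (hfull : IsFullElem a) :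
    ∃ ε : ℝ, 0 < ε ∧ IsFullElem (cfc (fun t : ℝ => max (t - ε) 0) a) := by
  classical
  set gen : Set A := {x | ∃ y z : A, x = y * a * z} with hgen
  set G : AddSubgroup A := AddSubgroup.closure gen with hG
  have hmull : ∀ c : A, ∀ x ∈ G, c * x ∈ G := by
    intro c x hx
    refine AddSubgroup.closure_induction ?_ ?_ ?_ ?_ hx
    · rintro x ⟨y, z, rfl⟩
      exact AddSubgroup.subset_closure ⟨c * y, z, by noncomm_ring⟩
    · simpa using G.zero_mem
    · intro x y _ _ hx hy
      simpa [mul_add] using G.add_mem hx hy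
    · intro x _ hx
      simpa [mul_neg] using G.neg_mem hx
  have hmulr : ∀ c : A, ∀ x ∈ G, x * c ∈ G := by
    intro c x hx
    refine AddSubgroup.closure_induction ?_ ?_ ?_ ?_ hx
    · rintro x ⟨y, z, rfl⟩
      exact AddSubgroup.subset_closure ⟨y, z * c, by noncomm_ring⟩
    · simpa using G.zero_mem
    · intro x y _ _ hx hy
      simpa [add_mul] using G.add_mem hx hy
    · intro x _ hx
      simpa [neg_mul] using G.neg_mem hx
  have z0 : (0 : A) ∈ closure (G : Set A) := subset_closure G.zero_mem
  have zadd : ∀ {x y : A}, x ∈ closure (G : Set A) → y ∈ closure (G : Set A) →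
      x + y ∈ closure (G : Set A) :=
    fun hx hy => map_mem_closure₂ continuous_add hx hy fun u hu v hv => G.add_mem hu hv
  have zneg : ∀ {x : A}, x ∈ closure (G : Set A) → -x ∈ closure (G : Set A) :=
    fun hx => map_mem_closure continuous_neg hx fun u hu => G.neg_mem hu
  have zml : ∀ {x y : A}, y ∈ closure (G : Set A) → x * y ∈ closure (G : Set A) :=
    fun {x y} hy => map_mem_closure (f := (x * ·)) (continuous_mul_left x) hy fun u hu => hmull x u hu
  have zmr : ∀ {x y : A}, x ∈ closure (G : Set A) → x * y ∈ closure (G : Set A) :=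
    fun {x y} hx => map_mem_closure (f := (· * y)) (continuous_mul_right y) hx fun u hu => hmulr y u hu
  set J : TwoSidedIdeal A := TwoSidedIdeal.mk' (closure (G : Set A)) z0 zadd zneg zml zmr
    with hJ
  have hJcoe : (J : Set A) = closure (G : Set A) := TwoSidedIdeal.coe_mk' _ _ _ _ _ _
  have haJ : a ∈ J := by
    rw [hJ, TwoSidedIdeal.mem_mk']
    exact subset_closure (AddSubgroup.subset_closure ⟨1, 1, by simp⟩)
  have htop : J = ⊤ := hfull J (hJcoe ▸ isClosed_closure) haJ
  have h1 : (1 : A) ∈ closure (G : Set A) := by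
    rw [← hJcoe]
    exact SetLike.mem_coe.mpr (J.one_mem htop)
  obtain ⟨s, hs, hdist⟩ := Metric.mem_closure_iff.mp h1 (1/4) (by norm_num)
  -- the approximation property, by induction on membership in `G`
  have hP : ∀ s ∈ G, ∀ η : ℝ, 0 < η → ∃ ε : ℝ, 0 < ε ∧ ∃ s' : A,
      (∀ I : TwoSidedIdeal A, cfc (fun t : ℝ => max (t - ε) 0) a ∈ I → s' ∈ I) ∧
      ‖s - s'‖ ≤ η := by
    intro s hs
    refine AddSubgroup.closure_induction ?_ ?_ ?_ ?_ hs
    · rintro x ⟨y, z, rfl⟩ η hη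
      set C : ℝ := ‖y‖ * ‖z‖ + 1 with hC
      have hC0 : 0 < C := by positivity
      set ε : ℝ := η / C with hε
      have hε0 : 0 < ε := by positivity
      refine ⟨ε, hε0, y * cfc (fun t : ℝ => max (t - ε) 0) a * z, fun I hm =>
        I.mul_mem_right _ _ (I.mul_mem_left _ _ hm), ?_⟩
      set c : A := cfc (fun t : ℝ => max (t - ε) 0) a with hc
      have hac : ‖a - c‖ ≤ ε := by
        have e1 : a - c = cfc (fun t : ℝ => t - max (t - ε) 0) a := by
          rw [cfc_sub (fun t : ℝ => t) (fun t : ℝ => max (t - ε) 0) a (by fun_prop)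
            (by fun_prop), cfc_id' ℝ a (IsSelfAdjoint.of_nonneg ha)]
        rw [e1]
        refine norm_cfc_le hε0.le fun x hx => ?_
        have hx0 : 0 ≤ x := spectrum_nonneg_of_nonneg ha hx
        rw [Real.norm_eq_abs, abs_le]
        rcases le_or_gt x ε with h | h
        · rw [max_eq_right (by linarith : x - ε ≤ 0)]
          constructor <;> linarith
        · rw [max_eq_left (by linarith : (0:ℝ) ≤ x - ε)]
          constructor <;> linarith
      have e2 : y * a * z - y * c * z = y * (a - c) * z := by noncomm_ring
      rw [e2]
      calc ‖y * (a - c) * z‖ ≤ ‖y * (a - c)‖ * ‖z‖ := norm_mul_le _ _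
        _ ≤ ‖y‖ * ‖a - c‖ * ‖z‖ := by
            gcongr
            exact norm_mul_le _ _
        _ ≤ ‖y‖ * ε * ‖z‖ := by gcongr
        _ ≤ C * ε := by
            rw [hC]
            nlinarith [norm_nonneg y, norm_nonneg z, hε0.le]
        _ = η := by
            rw [hε]
            field_simp
    · intro η hη
      exact ⟨1, one_pos, 0, fun I _ => I.zero_mem, by simp; linarith⟩
    · intro x y _ _ ihx ihy η hη
      obtain ⟨ε₁, hε₁, s₁, hQ₁, hn₁⟩ := ihx (η/2) (by linarith)
      obtain ⟨ε₂, hε₂, s₂, hQ₂, hn₂⟩ := ihy (η/2) (by linarith)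
      refine ⟨min ε₁ ε₂, lt_min hε₁ hε₂, s₁ + s₂, ?_, ?_⟩
      · intro I hm
        exact I.add_mem (hQ₁ I (pull_mem a (lt_min hε₁ hε₂) (min_le_left _ _) I hm))
          (hQ₂ I (pull_mem a (lt_min hε₁ hε₂) (min_le_right _ _) I hm))
      · have e : x + y - (s₁ + s₂) = (x - s₁) + (y - s₂) := by abel
        rw [e]
        calc ‖(x - s₁) + (y - s₂)‖ ≤ ‖x - s₁‖ + ‖y - s₂‖ := norm_add_le _ _
          _ ≤ η := by linarith
    · intro x _ ihx η hη
      obtain ⟨ε₁, hε₁, s₁, hQ₁, hn₁⟩ := ihx η hη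
      refine ⟨ε₁, hε₁, -s₁, fun I hm => I.neg_mem (hQ₁ I hm), ?_⟩
      have e : -x - -s₁ = -(x - s₁) := by abel
      rw [e, norm_neg]
      exact hn₁
  obtain ⟨ε, hε, s', hQ, hn⟩ := hP s hs (1/4) (by norm_num)
  have h1s : ‖(1 : A) - s‖ < 1/4 := by rwa [← dist_eq_norm]
  have h1s' : ‖(1 : A) - s'‖ < 1 := by
    have e : (1 : A) - s' = ((1 : A) - s) + (s - s') := by abel
    calc ‖(1 : A) - s'‖ = ‖((1 : A) - s) + (s - s')‖ := by rw [e]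
      _ ≤ ‖(1 : A) - s‖ + ‖s - s'‖ := norm_add_le _ _
      _ < 1 := by linarith
  have hu : IsUnit s' := by
    have := isUnit_one_sub_of_norm_lt_one h1s'
    simpa using this
  obtain ⟨u, hu'⟩ := hu
  refine ⟨ε, hε, fun I _ hm => I.eq_top ?_⟩
  have hin : (↑u⁻¹ : A) * s' ∈ I := I.mul_mem_left _ _ (hQ I hm)
  rwa [← hu', Units.inv_mul] at hin

/-- Part 2, in slightly more general form: if `(a - ε)₊` is full and `g` is a continuous
function, `0 ≤ g ≤ 1` on the spectrum of `a`, identically `1` past `ε`, then `g(a)` is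
purely full. -/
private lemma purelyFull_of_full (a : A) (ha : 0 ≤ a) {ε : ℝ}
    {g : ℝ → ℝ} (hgc : Continuous g) (hg0 : ∀ t, 0 ≤ t → 0 ≤ g t)
    (hgle : ∀ t, 0 ≤ t → g t ≤ 1) (hg1 : ∀ t, ε < t → g t = 1)
    (hfull : IsFullElem (cfc (fun t : ℝ => max (t - ε) 0) a)) :
    PurelyFull (cfc g a) := by
  have hsp : ∀ x ∈ spectrum ℝ a, 0 ≤ x := fun x hx => spectrum_nonneg_of_nonneg ha hx
  refine ⟨cfc_nonneg fun x hx => hg0 x (hsp x hx), ?_, ?_⟩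
  · refine norm_cfc_le zero_le_one fun x hx => ?_
    rw [Real.norm_eq_abs, abs_le]
    exact ⟨by linarith [hg0 x (hsp x hx)], hgle x (hsp x hx)⟩
  · intro δ hδ0 hδ1
    have hcomp : cfc (fun t : ℝ => max (t - δ) 0) (cfc g a)
        = cfc (fun t : ℝ => max (g t - δ) 0) a :=
      (cfc_comp' (fun t : ℝ => max (t - δ) 0) g a (by fun_prop) hgc.continuousOn
        (IsSelfAdjoint.of_nonneg ha)).symm
    rw [hcomp]
    exact key_full a hδ1 hgc hg1 hfull

end Aux

/-- Let `a` be a positive full element in a unital C*-algebra `A`.  Then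
there exists `ε > 0` such that `(a - ε)₊` is full; for any `ε > 0` such that `(a - ε)₊` is
full, the element `f_ε(a)`, where `f_ε(t) = min (ε⁻¹ t) 1`, is purely full; and, in
particular, the hereditary subalgebra generated by `a` (the closure of `a A a`) contains a
purely full element. -/
theorem exists_purelyFull_of_full (A : Type*) [CStarAlgebra A] [PartialOrder A]
    [StarOrderedRing A] (a : A) (ha : 0 ≤ a) (hfull : IsFullElem a) :
    (∃ ε : ℝ, 0 < ε ∧ IsFullElem (cfc (fun t : ℝ => max (t - ε) 0) a)) ∧
    (∀ ε : ℝ, 0 < ε → IsFullElem (cfc (fun t : ℝ => max (t - ε) 0) a) →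
      PurelyFull (cfc (fun t : ℝ => min (ε⁻¹ * t) 1) a)) ∧
    (∃ b : A, PurelyFull b ∧ b ∈ closure {x : A | ∃ y : A, x = a * y * a}) := by
  obtain ⟨ε₀, hε₀, hfull₀⟩ := exists_eps a ha hfull
  have hmin1 : ∀ (ε : ℝ), 0 < ε → ∀ t : ℝ, ε < t → min (ε⁻¹ * t) 1 = 1 := by
    intro ε hε t ht
    refine min_eq_right ?_
    have h1 : ε⁻¹ * ε ≤ ε⁻¹ * t := by
      apply mul_le_mul_of_nonneg_left ht.le (by positivity)
    rwa [inv_mul_cancel₀ hε.ne'] at h1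
  have hmin0 : ∀ (ε : ℝ), 0 < ε → ∀ t : ℝ, 0 ≤ t → 0 ≤ min (ε⁻¹ * t) 1 :=
    fun ε hε t ht => le_min (by positivity) zero_le_one
  refine ⟨⟨ε₀, hε₀, hfull₀⟩, ?_, ?_⟩
  · intro ε hε hfe
    exact purelyFull_of_full a ha (by fun_prop) (hmin0 ε hε)
      (fun t _ => min_le_right _ _) (hmin1 ε hε) hfe
  · -- the purely full element in the hereditary subalgebra
    set g : ℝ → ℝ := fun t => (min (ε₀⁻¹ * t) 1)^2 with hg
    set h : ℝ → ℝ := fun t => ((max t ε₀)⁻¹)^2 with hh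
    have hhc : Continuous h := by
      have : Continuous fun t : ℝ => (max t ε₀)⁻¹ :=
        Continuous.inv₀ (continuous_id.max continuous_const)
          (fun x => ne_of_gt (lt_of_lt_of_le hε₀ (le_max_right _ _)))
      exact this.pow 2
    refine ⟨cfc g a, ?_, ?_⟩
    · refine purelyFull_of_full a ha (by fun_prop) (fun t _ => sq_nonneg _)
        (fun t ht => ?_) (fun t ht => by rw [hg]; simp only; rw [hmin1 ε₀ hε₀ t ht, one_pow])
        hfull₀
      · rw [hg]
        simp only
        rw [sq]
        have h1 : 0 ≤ min (ε₀⁻¹ * t) 1 := hmin0 ε₀ hε₀ t ht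
        have h2 : min (ε₀⁻¹ * t) 1 ≤ 1 := min_le_right _ _
        nlinarith
    · refine subset_closure ⟨cfc h a, ?_⟩
      have e1 : cfc g a = cfc (fun t : ℝ => t * h t * t) a := by
        refine cfc_congr fun x hx => ?_
        have hx0 : 0 ≤ x := spectrum_nonneg_of_nonneg ha hx
        rw [hg, hh]
        simp only
        rcases le_or_gt x ε₀ with hc | hc
        · rw [max_eq_right hc, min_eq_left]
          · field_simp
          · rw [← inv_mul_cancel₀ hε₀.ne']
            exact mul_le_mul_of_nonneg_left hc (by positivity)
        · rw [max_eq_left hc.le, hmin1 ε₀ hε₀ x hc, one_pow]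
          have hx0' : x ≠ 0 := (hε₀.trans hc).ne'
          field_simp
      have e2 : cfc (fun t : ℝ => t * h t * t) a = a * cfc h a * a := by
        have c1 : cfc (fun t : ℝ => t * h t * t) a
            = cfc (fun t : ℝ => t * h t) a * cfc (fun t : ℝ => t) a :=
          cfc_mul _ _ a (by fun_prop) (by fun_prop)
        have c2 : cfc (fun t : ℝ => t * h t) a = cfc (fun t : ℝ => t) a * cfc h a :=
          cfc_mul _ _ a (by fun_prop) hhc.continuousOn
        rw [c1, c2, cfc_id' ℝ a (IsSelfAdjoint.of_nonneg ha)]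
      rw [e1, e2]
end

section
/- A unital C*-algebra has the 2-splitting property if and only if it contains two purely full pairwise orthogonal elements (i.e., purely full elements a, b with ab = 0). -/
/-- A C*-algebra has the *2-splitting property* if it contains two full positive elements
`a, b` with `a * b = 0`. -/
def TwoSplitting (A : Type*) [CStarAlgebra A] [PartialOrder A] [StarOrderedRing A] : Prop :=
  ∃ a b : A, 0 ≤ a ∧ 0 ≤ b ∧ IsFullElem a ∧ IsFullElem b ∧ a * b = 0

/-!
A full positive `a` generates `A` even algebraically: the closure of the ideal it generates is
`A`, so that ideal contains an element close to `1`, hence a unit. Generating `A` algebraically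
is an open condition, since a witness `1 = ∑ rᵢ a sᵢ` depends continuously on `a`; as
`‖a - (a - δ)₊‖ ≤ δ`, some `(a - δ)₊` with `δ > 0` still generates `A`. Now `a' = g(a)` with
`g t = t / max t δ` is a positive contraction with `g = 1` on `[δ, ∞)`, so for `ε < 1` the element
`(a - δ)₊` is a multiple of `(a' - ε)₊` and `a'` is purely full. Since `a' = c a` for some `c`
commuting with `a`, orthogonality passes from `a, b` to `a', b'`. Conversely `(a - 0)₊ = a`.
-/

namespace TwoSidedIdeal

section TopologicalRing

variable {R : Type*} [NonUnitalNonAssocRing R] [TopologicalSpace R] [IsTopologicalRing R]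

def topologicalClosure (I : TwoSidedIdeal R) : TwoSidedIdeal R :=
  .mk' (closure I) (subset_closure I.zero_mem)
    (fun hx hy => map_mem_closure₂ continuous_add hx hy fun _ hu _ hv => I.add_mem hu hv)
    (fun hx => map_mem_closure continuous_neg hx fun _ hu => I.neg_mem hu)
    (fun {x _} hy => map_mem_closure (continuous_const_mul x) hy fun u hu =>
      I.mul_mem_left x u hu)
    (fun {_ y} hx => map_mem_closure (f := (· * y)) (continuous_mul_const y) hx fun u hu =>
      I.mul_mem_right u y hu)

lemma coe_topologicalClosure (I : TwoSidedIdeal R) :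
    (I.topologicalClosure : Set R) = closure I := by
  rw [topologicalClosure, coe_mk']

lemma isClosed_topologicalClosure (I : TwoSidedIdeal R) :
    IsClosed (I.topologicalClosure : Set R) := by
  rw [coe_topologicalClosure]
  exact isClosed_closure

lemma le_topologicalClosure (I : TwoSidedIdeal R) : I ≤ I.topologicalClosure := by
  intro x hx
  rw [← SetLike.mem_coe, coe_topologicalClosure]
  exact subset_closure hx

lemma exists_continuous_of_mem_span_singleton {a x : R} (hx : x ∈ span {a}) :
    ∃ F : R → R, Continuous F ∧ F a = x ∧ ∀ b, F b ∈ span {b} := by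
  induction hx using span_induction with
  | mem x hx =>
    rw [Set.mem_singleton_iff.1 hx]
    exact ⟨id, continuous_id, rfl, fun b => subset_span rfl⟩
  | zero => exact ⟨0, continuous_const, rfl, fun b => zero_mem _⟩
  | add x y _ _ hx hy =>
    obtain ⟨F, hF, rfl, hFspan⟩ := hx
    obtain ⟨G, hG, rfl, hGspan⟩ := hy
    exact ⟨F + G, hF.add hG, rfl, fun b => add_mem _ (hFspan b) (hGspan b)⟩
  | neg x _ hx =>
    obtain ⟨F, hF, rfl, hFspan⟩ := hx
    exact ⟨-F, hF.neg, rfl, fun b => neg_mem _ (hFspan b)⟩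
  | left_absorb r x _ hx =>
    obtain ⟨F, hF, rfl, hFspan⟩ := hx
    exact ⟨(r * F ·), continuous_const.mul hF, rfl, fun b => mul_mem_left _ r _ (hFspan b)⟩
  | right_absorb r x _ hx =>
    obtain ⟨F, hF, rfl, hFspan⟩ := hx
    exact ⟨(F · * r), hF.mul continuous_const, rfl, fun b => mul_mem_right _ _ r (hFspan b)⟩

end TopologicalRing

lemma eq_top_of_isUnit_mem {R : Type*} [Ring R] {I : TwoSidedIdeal R} {u : R} (hu : IsUnit u)
    (huI : u ∈ I) : I = ⊤ := by
  obtain ⟨u, rfl⟩ := hu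
  rw [← one_mem_iff, ← u.inv_mul]
  exact I.mul_mem_left _ _ huI

section NormedRing

variable {R : Type*} [NormedRing R] [HasSummableGeomSeries R]

lemma isOpen_setOf_span_singleton_eq_top : IsOpen {a : R | span {a} = ⊤} := by
  refine isOpen_iff_mem_nhds.2 fun a ha => ?_
  obtain ⟨F, hF, hFa, hFspan⟩ :=
    exists_continuous_of_mem_span_singleton ((one_mem_iff _).2 ha)
  refine Filter.mem_of_superset ((Units.isOpen.preimage hF).mem_nhds ?_) fun b hb =>
    eq_top_of_isUnit_mem hb (hFspan b)
  simp [hFa]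

end NormedRing

end TwoSidedIdeal

open TwoSidedIdeal

lemma continuous_inv_max_const {δ : ℝ} (hδ : 0 < δ) : Continuous fun t : ℝ => (max t δ)⁻¹ :=
  (continuous_id.max continuous_const).inv₀ fun t => (hδ.trans_le (le_max_right t δ)).ne'

lemma max_sub_eq_max_inv_mul_sub_mul {δ ε t : ℝ} (hδ : 0 < δ) (hε : ε < 1) :
    max (t - δ) 0 = max ((max t δ)⁻¹ * t - ε) 0 * ((1 - ε)⁻¹ * max (t - δ) 0) := by
  rcases le_or_gt t δ with htδ | hδt
  · simp [max_eq_right (sub_nonpos.2 htδ)]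
  · rw [max_eq_left hδt.le, inv_mul_cancel₀ (hδ.trans hδt).ne', max_eq_left (sub_pos.2 hε).le,
      ← mul_assoc, mul_inv_cancel₀ (sub_pos.2 hε).ne', one_mul]

lemma isFullElem_of_span_singleton_eq_top {R : Type*} [NonUnitalNonAssocRing R]
    [TopologicalSpace R] {a : R} (h : span {a} = ⊤) : IsFullElem a :=
  fun _ _ ha => eq_top_iff.2 (h ▸ span_le.2 (Set.singleton_subset_iff.2 ha))

lemma IsFullElem.span_singleton_eq_top {R : Type*} [NormedRing R] [HasSummableGeomSeries R]
    {a : R} (ha : IsFullElem a) : span {a} = ⊤ := by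
  have hclosure : (span {a}).topologicalClosure = ⊤ :=
    ha _ (isClosed_topologicalClosure _) (le_topologicalClosure _ (subset_span rfl))
  have h1 : (1 : R) ∈ closure (span {a} : Set R) := by
    rw [← coe_topologicalClosure, hclosure]
    trivial
  obtain ⟨u, hu, huspan⟩ := mem_closure_iff.1 h1 _ Units.isOpen isUnit_one
  exact eq_top_of_isUnit_mem hu huspan

section CStarAlgebra

variable {A : Type*} [CStarAlgebra A] [PartialOrder A] [StarOrderedRing A]

lemma norm_sub_cfc_max_sub_le {a : A} (ha : 0 ≤ a) {δ : ℝ} (hδ : 0 ≤ δ) :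
    ‖a - cfc (fun t : ℝ => max (t - δ) 0) a‖ ≤ δ := by
  nth_rewrite 1 [← cfc_id' ℝ a]
  rw [← cfc_sub _ _]
  refine norm_cfc_le hδ fun t ht => ?_
  have ht0 : 0 ≤ t := spectrum_nonneg_of_nonneg ha ht
  rw [Real.norm_eq_abs, abs_le]
  constructor <;> cases max_cases (t - δ) 0 <;> linarith

lemma IsFullElem.exists_pos_span_cfc_max_sub_eq_top {a : A} (hfull : IsFullElem a) (ha : 0 ≤ a) :
    ∃ δ > 0, span {cfc (fun t : ℝ => max (t - δ) 0) a} = ⊤ := by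
  obtain ⟨r, hr, hball⟩ :=
    Metric.isOpen_iff.1 isOpen_setOf_span_singleton_eq_top a hfull.span_singleton_eq_top
  refine ⟨r / 2, by positivity, hball ?_⟩
  rw [Metric.mem_ball, dist_comm, dist_eq_norm]
  exact (norm_sub_cfc_max_sub_le ha (by positivity)).trans_lt (by linarith)

lemma PurelyFull.isFullElem {a : A} (h : PurelyFull a) : IsFullElem a := by
  have h0 := h.2.2 0 le_rfl one_pos
  rwa [cfc_congr (g := id) fun t ht => by simp [spectrum_nonneg_of_nonneg h.1 ht],
    cfc_id ℝ a (IsSelfAdjoint.of_nonneg h.1)] at h0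

lemma purelyFull_cfc_inv_max_mul {a : A} (ha : 0 ≤ a) {δ : ℝ} (hδ : 0 < δ)
    (hspan : span {cfc (fun t : ℝ => max (t - δ) 0) a} = ⊤) :
    PurelyFull (cfc (fun t : ℝ => (max t δ)⁻¹ * t) a) := by
  have hmax : ∀ t, 0 < max t δ := fun t => hδ.trans_le (le_max_right t δ)
  have hcont : Continuous fun t : ℝ => (max t δ)⁻¹ * t :=
    (continuous_inv_max_const hδ).mul continuous_id
  refine ⟨cfc_nonneg fun t ht => ?_, norm_cfc_le zero_le_one fun t ht => ?_, fun ε _ hε => ?_⟩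
  · have := spectrum_nonneg_of_nonneg ha ht
    have := hmax t
    positivity
  · have := spectrum_nonneg_of_nonneg ha ht
    rw [Real.norm_of_nonneg (by have := hmax t; positivity), inv_mul_le_one₀ (hmax t)]
    exact le_max_left t δ
  · have hcut : Continuous fun t : ℝ => max ((max t δ)⁻¹ * t - ε) 0 :=
      (hcont.sub continuous_const).max continuous_const
    rw [← cfc_comp' (fun s : ℝ => max (s - ε) 0) _ a (by fun_prop) hcont.continuousOn]
    refine isFullElem_of_span_singleton_eq_top (eq_top_iff.2 (hspan ▸ span_le.2 ?_))
    rw [Set.singleton_subset_iff, cfc_congr fun t _ => max_sub_eq_max_inv_mul_sub_mul hδ hε,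
      cfc_mul _ _ a hcut.continuousOn (by fun_prop)]
    exact mul_mem_right _ _ _ (subset_span rfl)

lemma IsFullElem.exists_commute_purelyFull_mul {a : A} (hfull : IsFullElem a) (ha : 0 ≤ a) :
    ∃ c : A, Commute c a ∧ PurelyFull (c * a) := by
  obtain ⟨δ, hδ, hspan⟩ := hfull.exists_pos_span_cfc_max_sub_eq_top ha
  have hcont := continuous_inv_max_const hδ
  refine ⟨cfc (fun t : ℝ => (max t δ)⁻¹) a, ?_, ?_⟩
  · have := cfc_commute_cfc (fun t : ℝ => (max t δ)⁻¹) (fun t => t) a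
    rwa [cfc_id' ℝ a] at this
  · have hmul : cfc (fun t : ℝ => (max t δ)⁻¹ * t) a = cfc (fun t : ℝ => (max t δ)⁻¹) a * a := by
      rw [cfc_mul (fun t : ℝ => (max t δ)⁻¹) (fun t => t) a hcont.continuousOn, cfc_id' ℝ a]
    exact hmul ▸ purelyFull_cfc_inv_max_mul ha hδ hspan

end CStarAlgebra

/-- A unital C*-algebra has the `2`-splitting property if and only if it
contains two purely full pairwise orthogonal elements. -/
theorem twoSplitting_iff_purelyFull_orthogonal (A : Type*) [CStarAlgebra A] [PartialOrder A]
    [StarOrderedRing A] :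
    TwoSplitting A ↔ ∃ a b : A, PurelyFull a ∧ PurelyFull b ∧ a * b = 0 := by
  constructor
  · rintro ⟨a, b, ha, hb, hfa, hfb, hab⟩
    obtain ⟨c, -, hc⟩ := hfa.exists_commute_purelyFull_mul ha
    obtain ⟨d, hdb, hd⟩ := hfb.exists_commute_purelyFull_mul hb
    refine ⟨c * a, d * b, hc, hd, ?_⟩
    rw [hdb.eq, mul_assoc, ← mul_assoc a, hab, zero_mul, mul_zero]
  · rintro ⟨a, b, hpa, hpb, hab⟩
    exact ⟨a, b, hpa.1, hpb.1, hpa.isFullElem, hpb.isFullElem, hab⟩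
end

section
/- Let S be an ordered additive commutative monoid (addition is monotone in each variable) in which x ≤ x + y holds for all x, y ∈ S. Suppose there are integers m ≥ 2 and n ≥ 1 such that for all x, y ∈ S, n·x ≤ m·y implies x ≤ y. Then for every x ∈ S and every integer k ≥ 1: if k·x is properly infinite (i.e., 2·(k·x) ≤ k·x), then x is properly infinite (i.e., 2·x ≤ x). -/
/-!
Write `z = k • x`. Since `z` is properly infinite it absorbs its own multiples, so
`n • z ≤ z ≤ (m * j) • x = m • (j • x)` for `j = ⌈k / 2⌉`, and comparison gives `z ≤ j • x`.
Hence `2 • (j • x) ≤ 2 • z ≤ z ≤ j • x`: the multiple `j • x` is again properly infinite, and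
halving `k` down to `1` proves the claim.
-/

def IsProperlyInfinite {S : Type*} [AddMonoid S] [LE S] (z : S) : Prop :=
  2 • z ≤ z

/-- `S` has `(m, n)`-comparison. -/
def HasNSMulComparison (S : Type*) [AddMonoid S] [LE S] (m n : ℕ) : Prop :=
  ∀ x y : S, n • x ≤ m • y → x ≤ y

section

variable {S : Type*} [AddCommMonoid S] [PartialOrder S] [IsOrderedAddMonoid S]

theorem IsProperlyInfinite.nsmul_le {z : S} (h : IsProperlyInfinite z) (hz : 0 ≤ z) :
    ∀ ℓ : ℕ, ℓ • z ≤ z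
  | 0 => by simpa using hz
  | ℓ + 1 =>
    calc (ℓ + 1) • z = ℓ • z + z := succ_nsmul z ℓ
      _ ≤ z + z := add_le_add_left (h.nsmul_le hz ℓ) z
      _ = 2 • z := (two_nsmul z).symm
      _ ≤ z := h

theorem IsProperlyInfinite.half_nsmul {m n : ℕ} (hcomp : HasNSMulComparison S m n) (hm : 2 ≤ m)
    (hnonneg : ∀ y : S, 0 ≤ y) {x : S} {k : ℕ} (h : IsProperlyInfinite (k • x)) :
    IsProperlyInfinite (((k + 1) / 2) • x) := by
  set j := (k + 1) / 2
  have hk_le : k ≤ m * j :=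
    (show k ≤ 2 * j by omega).trans (Nat.mul_le_mul_right j hm)
  have hkj : k • x ≤ j • x := hcomp _ _ <|
    calc n • (k • x) ≤ k • x := h.nsmul_le (hnonneg _) n
      _ ≤ (m * j) • x := nsmul_le_nsmul_left (hnonneg x) hk_le
      _ = m • (j • x) := mul_nsmul' x m j
  calc 2 • (j • x) = (2 * j) • x := (mul_nsmul' x 2 j).symm
    _ ≤ (2 * k) • x := nsmul_le_nsmul_left (hnonneg x) (by omega)
    _ = 2 • (k • x) := mul_nsmul' x 2 k
    _ ≤ k • x := h
    _ ≤ j • x := hkj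

theorem IsProperlyInfinite.of_nsmul {m n : ℕ} (hcomp : HasNSMulComparison S m n) (hm : 2 ≤ m)
    (hnonneg : ∀ y : S, 0 ≤ y) {x : S} {k : ℕ} (hk : k ≠ 0) (h : IsProperlyInfinite (k • x)) :
    IsProperlyInfinite x := by
  induction k using Nat.strong_induction_on with
  | _ k ih =>
    obtain rfl | hk1 := eq_or_ne k 1
    · simpa using h
    · exact ih _ (by omega) (by omega) (h.half_nsmul hcomp hm hnonneg)

end

theorem properlyInfinite_of_nsmul_properlyInfinite_general {S : Type*} [AddCommMonoid S] [PartialOrder S]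
    [IsOrderedAddMonoid S]
    (hle : ∀ x y : S, x ≤ x + y)
    (m n : ℕ) (hm : 2 ≤ m)
    (hcomp : ∀ x y : S, n • x ≤ m • y → x ≤ y)
    (x : S) (k : ℕ) (hk : 1 ≤ k)
    (hki : 2 • (k • x) ≤ k • x) :
    2 • x ≤ x :=
  IsProperlyInfinite.of_nsmul hcomp hm (fun y => by simpa using hle 0 y) (by omega) hki

/-- Let `S` be an ordered additive commutative monoid in which
`x ≤ x + y` holds for all `x, y`.  Suppose there are integers `m ≥ 2` and `n ≥ 1` such
that `n • x ≤ m • y` implies `x ≤ y` for all `x, y ∈ S` ("(m,n)-comparison").  Then for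
every `x ∈ S` and every integer `k ≥ 1`: if `k • x` is properly infinite
(`2 • (k • x) ≤ k • x`), then `x` is properly infinite (`2 • x ≤ x`). -/
theorem properlyInfinite_of_nsmul_properlyInfinite {S : Type*} [AddCommMonoid S] [PartialOrder S]
    [IsOrderedAddMonoid S]
    (hle : ∀ x y : S, x ≤ x + y)
    (m n : ℕ) (hm : 2 ≤ m) (hn : 1 ≤ n)
    (hcomp : ∀ x y : S, n • x ≤ m • y → x ≤ y)
    (x : S) (k : ℕ) (hk : 1 ≤ k)
    (hki : 2 • (k • x) ≤ k • x) :
    2 • x ≤ x :=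
  properlyInfinite_of_nsmul_properlyInfinite_general hle m n hm hcomp x k hk hki
end
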